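/- Let l ≥ w > 0 and let N_c ≥ 1 be an integer. Then for every configuration y = (x, θ) ∈ ℝ² × ℝ, the oriented rectangular footprint is covered by the multi-circle cover: S(y; l, w) ⊆ BC(y; l, w, N_c), where the N_c closed balls have the common radius r = √((l/(2N_c))² + w²/4) and are placed equidistantly along the rectangle's central longitudinal axis with spacing d_c = 2√(r² − w²/4). -/

import Mathlib

open Real Set

/-- Euclidean norm on `ℝ × ℝ`. -/
noncomputable def enorm2 (p : ℝ × ℝ) : ℝ := Real.sqrt (p.1 ^ 2 + p.2 ^ 2)

/-- Closed Euclidean ball in `ℝ × ℝ` with center `c` and radius `r`. -/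
noncomputable def cball (c : ℝ × ℝ) (r : ℝ) : Set (ℝ × ℝ) := {p | enorm2 (p - c) ≤ r}

/-- Unit heading vector `u(θ) = (cos θ, sin θ)`. -/
noncomputable def uvec (θ : ℝ) : ℝ × ℝ := (Real.cos θ, Real.sin θ)

/-- Rotation of a point of `ℝ × ℝ` by angle `θ` about the origin. -/
noncomputable def rot2 (θ : ℝ) (p : ℝ × ℝ) : ℝ × ℝ :=
  (Real.cos θ * p.1 - Real.sin θ * p.2, Real.sin θ * p.1 + Real.cos θ * p.2)

/-- Closed axis-aligned rectangle `[−l/2, l/2] × [−w/2, w/2]`. -/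
def Rect (l w : ℝ) : Set (ℝ × ℝ) := Set.Icc (-(l / 2)) (l / 2) ×ˢ Set.Icc (-(w / 2)) (w / 2)

/-- Oriented footprint: image of `Rect l w` under rotation by `θ` followed by translation by `x`. -/
noncomputable def footprint (x : ℝ × ℝ) (θ l w : ℝ) : Set (ℝ × ℝ) :=
  (fun p => x + rot2 θ p) '' Rect l w

/-- Common radius of the multi-circle cover. -/
noncomputable def circRadius (l w : ℝ) (Nc : ℕ) : ℝ :=
  Real.sqrt ((l / (2 * Nc)) ^ 2 + w ^ 2 / 4)

/-- Spacing of the circle centers of the multi-circle cover. -/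
noncomputable def circSpacing (l w : ℝ) (Nc : ℕ) : ℝ :=
  2 * Real.sqrt (circRadius l w Nc ^ 2 - w ^ 2 / 4)

/-- Multi-circle cover of the footprint with configuration `(x, θ)`:
`N_c` closed balls of radius `circRadius` centered at `x + L_i • u(θ)` with
`L_i = (2i − N_c − 1) d_c / 2`, `i = 1, …, N_c`. -/
noncomputable def multiCircle (x : ℝ × ℝ) (θ l w : ℝ) (Nc : ℕ) : Set (ℝ × ℝ) :=
  ⋃ i ∈ Finset.Icc 1 Nc,
    cball (x + ((2 * (i : ℝ) - Nc - 1) * circSpacing l w Nc / 2) • uvec θ)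
      (circRadius l w Nc)

/-! Rotations preserve `enorm2` and `L • uvec θ = rot2 θ (L, 0)`, so the rigid motion
`p ↦ x + rot2 θ p` carries the rectangle and the balls centered at the points `(L_i, 0)` onto the
footprint and the balls of its cover; membership is therefore decided in the body frame. There `d_c = l / N_c`, and the
`L_i` are the midpoints of the `N_c` cells of length `d_c` that tile `[-l/2, l/2]`. A point `(a, b)`
of the rectangle lies in some cell, so `|a - L_i| ≤ l / (2 N_c)` and `|b| ≤ w / 2`, which puts it
within `r` of `(L_i, 0)`. -/

lemma enorm2_rot2 (θ : ℝ) (p : ℝ × ℝ) : enorm2 (rot2 θ p) = enorm2 p := by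
  unfold enorm2 rot2
  congr 1
  linear_combination (p.1 ^ 2 + p.2 ^ 2) * Real.sin_sq_add_cos_sq θ

lemma rot2_sub (θ : ℝ) (p q : ℝ × ℝ) : rot2 θ (p - q) = rot2 θ p - rot2 θ q := by
  ext <;> simp only [rot2, Prod.fst_sub, Prod.snd_sub] <;> ring

lemma smul_uvec (θ L : ℝ) : L • uvec θ = rot2 θ (L, 0) := by
  ext <;> simp [uvec, rot2, mul_comm]

lemma add_rot2_mem_cball_iff (x : ℝ × ℝ) (θ : ℝ) (p c : ℝ × ℝ) (r : ℝ) :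
    x + rot2 θ p ∈ cball (x + rot2 θ c) r ↔ p ∈ cball c r := by
  simp only [cball, Set.mem_ofPred_eq, add_sub_add_left_eq_sub, ← rot2_sub, enorm2_rot2]

lemma enorm2_le_sqrt_of_abs_le {p : ℝ × ℝ} {a b : ℝ} (ha : |p.1| ≤ a) (hb : |p.2| ≤ b) :
    enorm2 p ≤ Real.sqrt (a ^ 2 + b ^ 2) :=
  Real.sqrt_le_sqrt (add_le_add (sq_le_sq' (abs_le.1 ha).1 (abs_le.1 ha).2)
    (sq_le_sq' (abs_le.1 hb).1 (abs_le.1 hb).2))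

lemma circSpacing_eq {l : ℝ} (hl : 0 ≤ l) (w : ℝ) (Nc : ℕ) : circSpacing l w Nc = l / Nc := by
  have hr : circRadius l w Nc ^ 2 = (l / (2 * Nc)) ^ 2 + w ^ 2 / 4 :=
    Real.sq_sqrt (by positivity)
  rw [circSpacing, hr, add_sub_cancel_right, Real.sqrt_sq (by positivity)]
  ring

lemma exists_mem_Icc_sub_one_le_le {n : ℕ} (hn : 1 ≤ n) {t : ℝ} (ht₀ : 0 ≤ t) (htn : t ≤ n) :
    ∃ i ∈ Finset.Icc 1 n, (i : ℝ) - 1 ≤ t ∧ t ≤ i := by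
  rcases Nat.eq_zero_or_pos ⌈t⌉₊ with h | h
  · refine ⟨1, Finset.mem_Icc.2 ⟨le_rfl, hn⟩, ?_, ?_⟩
    · simpa using ht₀
    · have : t ≤ 0 := by exact_mod_cast h ▸ Nat.le_ceil t
      push_cast; linarith
  · refine ⟨⌈t⌉₊, Finset.mem_Icc.2 ⟨h, Nat.ceil_le.2 htn⟩, ?_, Nat.le_ceil t⟩
    linarith [Nat.ceil_lt_add_one ht₀]

lemma exists_abs_sub_midpoint_le_half {n : ℕ} (hn : 1 ≤ n) {h : ℝ} (hh : 0 < h) {a : ℝ}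
    (ha : |a| ≤ n * h / 2) :
    ∃ i ∈ Finset.Icc 1 n, |a - (2 * (i : ℝ) - n - 1) * h / 2| ≤ h / 2 := by
  obtain ⟨ha₁, ha₂⟩ := abs_le.1 ha
  obtain ⟨i, hi, hti, hit⟩ := exists_mem_Icc_sub_one_le_le hn
    (t := (a + n * h / 2) / h) (div_nonneg (by linarith) hh.le)
    ((div_le_iff₀ hh).2 (by linarith))
  refine ⟨i, hi, abs_le.2 ⟨?_, ?_⟩⟩
  · linarith [(le_div_iff₀ hh).1 hti]
  · linarith [(div_le_iff₀ hh).1 hit]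

/-- For every configuration `(x, θ)`, the oriented rectangular footprint is covered by its
multi-circle cover. -/
theorem footprint_subset_multiCircle
    (l w : ℝ) (hw : 0 < w) (hlw : w ≤ l) (Nc : ℕ) (hNc : 1 ≤ Nc)
    (x : ℝ × ℝ) (θ : ℝ) :
    footprint x θ l w ⊆ multiCircle x θ l w Nc := by
  have hl : 0 < l := hw.trans_le hlw
  rintro _ ⟨p, ⟨hp₁, hp₂⟩, rfl⟩
  have hN : (0 : ℝ) < Nc := by exact_mod_cast hNc
  obtain ⟨i, hi, hpi⟩ := exists_abs_sub_midpoint_le_half hNc (div_pos hl hN) (a := p.1)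
    (abs_le.2 (by rw [mul_div_cancel₀ _ hN.ne']; exact hp₁))
  refine Set.mem_biUnion hi ?_
  rw [smul_uvec, add_rot2_mem_cball_iff, circSpacing_eq hl.le]
  simp only [cball, Set.mem_ofPred_eq]
  calc enorm2 (p - _) ≤ Real.sqrt ((l / (2 * Nc)) ^ 2 + (w / 2) ^ 2) :=
        enorm2_le_sqrt_of_abs_le (by simpa [div_div, mul_comm] using hpi)
          (by simpa using abs_le.2 hp₂)
    _ = circRadius l w Nc := by rw [circRadius]; ring_nf
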